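/- arXiv:1308.0002 — 3 statements merged into one kernel-verified Lean document; each statement's English description precedes it below -/
import Mathlib

section
/- Suppose P > 0 solves the discrete algebraic Riccati equation P = A^TPA − A^TPB(B^TPB)^{-1}B^TPA + Q and K := −(B^TPB)^{-1}B^TPA. Then for every x ∈ ℝ^n the least-squares minimizer of u ↦ ‖Gu − Hx‖₂² is given explicitly by the LQ feedback sequence u*(x) = [Kx; K(A+BK)x; …; K(A+BK)^{N−1}x] ∈ ℝ^N. -/
open Matrix Filter Topology

noncomputable section

/-- The block lower-triangular matrix `Φ ∈ ℝ^{nN×N}` whose (i,j)-th `n×1` block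
(0-indexed) is `A^{i-j}B` for `i ≥ j` and `0` otherwise. -/
def Phi (n N : ℕ) (A : Matrix (Fin n) (Fin n) ℝ) (B : Fin n → ℝ) :
    Matrix (Fin N × Fin n) (Fin N) ℝ :=
  Matrix.of fun p j =>
    if (j : ℕ) ≤ (p.1 : ℕ) then ((A ^ ((p.1 : ℕ) - (j : ℕ))) *ᵥ B) p.2 else 0

/-- `Φ_i ∈ ℝ^{n×N}`, the (i+1)-th row block of `Φ`,
i.e. `Φ_i = [A^i B, A^{i-1} B, …, B, 0, …, 0]`. -/
def PhiBlock (n N : ℕ) (A : Matrix (Fin n) (Fin n) ℝ) (B : Fin n → ℝ) (i : Fin N) :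
    Matrix (Fin n) (Fin N) ℝ :=
  Matrix.of fun r j => Phi n N A B (i, r) j

/-- `Υ := [A; A²; …; A^N] ∈ ℝ^{nN×n}`. -/
def Upsilon (n N : ℕ) (A : Matrix (Fin n) (Fin n) ℝ) :
    Matrix (Fin N × Fin n) (Fin n) ℝ :=
  Matrix.of fun p s => (A ^ ((p.1 : ℕ) + 1)) p.2 s

/-- `Q̄ := blockdiag(Q, …, Q, P)` with `N−1` copies of `Q` followed by `P`. -/
def Qbar (n N : ℕ) (Q P : Matrix (Fin n) (Fin n) ℝ) :
    Matrix (Fin N × Fin n) (Fin N × Fin n) ℝ :=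
  Matrix.of fun p q =>
    if p.1 = q.1 then (if (p.1 : ℕ) = N - 1 then P else Q) p.2 q.2 else 0

/-- The cost `u ↦ ‖Gu − Hx‖₂²`. -/
def Jcost {n N : ℕ} (G : Matrix (Fin N × Fin n) (Fin N) ℝ)
    (H : Matrix (Fin N × Fin n) (Fin n) ℝ) (x : Fin n → ℝ) (u : Fin N → ℝ) : ℝ :=
  (G *ᵥ u - H *ᵥ x) ⬝ᵥ (G *ᵥ u - H *ᵥ x)

/-- The feasible set `F_W(x) := {u ∈ ℝ^N : ‖Gu − Hx‖₂² ≤ xᵀWx}`. -/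
def Feas {n N : ℕ} (G : Matrix (Fin N × Fin n) (Fin N) ℝ)
    (H : Matrix (Fin N × Fin n) (Fin n) ℝ) (W : Matrix (Fin n) (Fin n) ℝ)
    (x : Fin n → ℝ) : Set (Fin N → ℝ) :=
  {u | Jcost G H x u ≤ x ⬝ᵥ (W *ᵥ x)}

/-- The least-squares solution `u*(x) := (GᵀG)⁻¹GᵀHx`. -/
def uStar {n N : ℕ} (G : Matrix (Fin N × Fin n) (Fin N) ℝ)
    (H : Matrix (Fin N × Fin n) (Fin n) ℝ) (x : Fin n → ℝ) : Fin N → ℝ :=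
  ((Gᵀ * G)⁻¹ * Gᵀ * H) *ᵥ x

/-- The LQ gain (row vector) `K := −(BᵀPB)⁻¹BᵀPA`. -/
def Kgain {n : ℕ} (A P : Matrix (Fin n) (Fin n) ℝ) (B : Fin n → ℝ) : Fin n → ℝ :=
  -((B ⬝ᵥ (P *ᵥ B))⁻¹ • Matrix.vecMul B (P * A))

/-- The closed-loop matrix `A + BK`. -/
def Acl {n : ℕ} (A P : Matrix (Fin n) (Fin n) ℝ) (B : Fin n → ℝ) :
    Matrix (Fin n) (Fin n) ℝ :=
  A + Matrix.vecMulVec B (Kgain A P B)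

/-- The discrete algebraic Riccati equation
`P = AᵀPA − AᵀPB(BᵀPB)⁻¹BᵀPA + Q`. -/
def Riccati {n : ℕ} (A P Q : Matrix (Fin n) (Fin n) ℝ) (B : Fin n → ℝ) : Prop :=
  P = Aᵀ * P * A -
      (B ⬝ᵥ (P *ᵥ B))⁻¹ •
        Matrix.vecMulVec (Aᵀ *ᵥ (P *ᵥ B)) (Matrix.vecMul B (P * A)) + Q

/-- The Lyapunov function `V(x) := xᵀPx`. -/
def Vfun {n : ℕ} (P : Matrix (Fin n) (Fin n) ℝ) (x : Fin n → ℝ) : ℝ :=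
  x ⬝ᵥ (P *ᵥ x)

/-- `c₁ := max_{i=0,…,N−1} λ_max(Φᵢᵀ P Φᵢ (GᵀG)⁻¹)`. -/
def c1const (n N : ℕ) (A P : Matrix (Fin n) (Fin n) ℝ) (B : Fin n → ℝ)
    (G : Matrix (Fin N × Fin n) (Fin N) ℝ) : ℝ :=
  ⨆ i : Fin N,
    sSup (spectrum ℝ ((PhiBlock n N A B i)ᵀ * P * PhiBlock n N A B i * (Gᵀ * G)⁻¹))

/-- `ρ := 1 − λ_min(QP⁻¹)`. -/
def rhoConst {n : ℕ} (Q P : Matrix (Fin n) (Fin n) ℝ) : ℝ :=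
  1 - sInf (spectrum ℝ (Q * P⁻¹))

/-- `c := (1−ρ)⁻¹(1−ρ^N)c₁`. -/
def cConst (n N : ℕ) (A P Q : Matrix (Fin n) (Fin n) ℝ) (B : Fin n → ℝ)
    (G : Matrix (Fin N × Fin n) (Fin N) ℝ) : ℝ :=
  (1 - rhoConst Q P)⁻¹ * (1 - rhoConst Q P ^ N) * c1const n N A P B G

/-- `w_i := ε_i − K Σ_{l=0}^{i−1} A^{i−1−l} B ε_l`. -/
def wErr {n N : ℕ} (A P : Matrix (Fin n) (Fin n) ℝ) (B : Fin n → ℝ)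
    (ε : Fin N → ℝ) (i : Fin N) : ℝ :=
  ε i - Kgain A P B ⬝ᵥ
    (∑ l ∈ Finset.univ.filter (fun l : Fin N => (l : ℕ) < (i : ℕ)),
      ε l • ((A ^ ((i : ℕ) - 1 - (l : ℕ))) *ᵥ B))

/-- The controllability matrix `[B, AB, …, A^{n−1}B]`. -/
def Ctrb {n : ℕ} (A : Matrix (Fin n) (Fin n) ℝ) (B : Fin n → ℝ) :
    Matrix (Fin n) (Fin n) ℝ :=
  Matrix.of fun r j => ((A ^ (j : ℕ)) *ᵥ B) r

/-!
Writing `xᵢ` for the states driven by `u` from `x₀ = x`, the cost `‖Gu − Hx‖₂²` is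
`Σ_{i=1}^{N-1} xᵢᵀQxᵢ + x_NᵀPx_N`. The Riccati equation says exactly that one step completes a
square: `(Ay + vB)ᵀP(Ay + vB) = yᵀPy − yᵀQy + BᵀPB (v − Ky)²`. Telescoping along the trajectory
gives `‖Gu − Hx‖₂² = xᵀPx − xᵀQx + BᵀPB Σᵢ (uᵢ − Kxᵢ)²`, which is minimal exactly when every
`uᵢ = Kxᵢ`, i.e. when `u` is the closed-loop feedback sequence.
-/

namespace LQ

section Trajectory

variable {R ι : Type*} [CommSemiring R] [Fintype ι] [DecidableEq ι]
  (A : Matrix ι ι R) (B x : ι → R)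

def trajectory (u : ℕ → R) : ℕ → ι → R
  | 0 => x
  | i + 1 => A *ᵥ trajectory u i + u i • B

theorem trajectory_eq_pow_mulVec_add_sum (u : ℕ → R) (m : ℕ) :
    trajectory A B x u m = A ^ m *ᵥ x + ∑ j ∈ Finset.range m, u j • (A ^ (m - 1 - j) *ᵥ B) := by
  induction m with
  | zero => simp [trajectory]
  | succ m ih =>
    rw [trajectory, ih, Finset.sum_range_succ, Matrix.mulVec_add, Matrix.mulVec_sum,
      pow_succ', ← Matrix.mulVec_mulVec, Nat.add_sub_cancel, Nat.sub_self, pow_zero,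
      Matrix.one_mulVec, add_assoc]
    congr 2
    refine Finset.sum_congr rfl fun j hj => ?_
    rw [Matrix.mulVec_smul, Matrix.mulVec_mulVec, ← pow_succ',
      show m - 1 - j + 1 = m - j by have := Finset.mem_range.mp hj; omega]

end Trajectory

variable {n : ℕ} (A : Matrix (Fin n) (Fin n) ℝ) (B x : Fin n → ℝ) {P Q : Matrix (Fin n) (Fin n) ℝ}

theorem Vfun_mulVec_add_smul (hRic : Riccati A P Q B) (hP : Pᵀ = P)
    (hr : B ⬝ᵥ (P *ᵥ B) ≠ 0) (y : Fin n → ℝ) (v : ℝ) :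
    Vfun P (A *ᵥ y + v • B) =
      Vfun P y - Vfun Q y + B ⬝ᵥ (P *ᵥ B) * (v - Kgain A P B ⬝ᵥ y) ^ 2 := by
  set r := B ⬝ᵥ (P *ᵥ B)
  set a := B ⬝ᵥ (P *ᵥ (A *ᵥ y))
  have hK : Kgain A P B ⬝ᵥ y = -(r⁻¹ * a) := by
    rw [Kgain, neg_dotProduct, smul_dotProduct, ← Matrix.dotProduct_mulVec,
      ← Matrix.mulVec_mulVec, smul_eq_mul]
  have hsymm : ∀ v w, v ⬝ᵥ (P *ᵥ w) = w ⬝ᵥ (P *ᵥ v) := fun v w => by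
    rw [Matrix.dotProduct_mulVec, ← Matrix.mulVec_transpose, hP, dotProduct_comm]
  have hquad : Vfun P y = Vfun P (A *ᵥ y) - r⁻¹ * a ^ 2 + Vfun Q y := by
    conv_lhs => rw [Vfun, hRic]
    simp only [Vfun, Matrix.add_mulVec, Matrix.sub_mulVec, Matrix.smul_mulVec,
      Matrix.vecMulVec_mulVec, dotProduct_add, dotProduct_sub, dotProduct_smul]
    have hAt : ∀ w, y ⬝ᵥ (Aᵀ *ᵥ w) = (A *ᵥ y) ⬝ᵥ w := fun w => by
      rw [Matrix.dotProduct_mulVec, Matrix.vecMul_transpose]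
    have hBA : B ᵥ* (P * A) ⬝ᵥ y = a := by
      rw [← Matrix.dotProduct_mulVec, ← Matrix.mulVec_mulVec]
    rw [← Matrix.mulVec_mulVec, ← Matrix.mulVec_mulVec, hAt, hAt, hBA, op_smul_eq_smul,
      hsymm (A *ᵥ y) B, smul_eq_mul, smul_eq_mul]
    ring
  have hexp : Vfun P (A *ᵥ y + v • B) = Vfun P (A *ᵥ y) + 2 * v * a + v ^ 2 * r := by
    simp only [Vfun, Matrix.mulVec_add, Matrix.mulVec_smul, dotProduct_add, add_dotProduct,
      dotProduct_smul, smul_dotProduct, smul_eq_mul, hsymm (A *ᵥ y) B]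
    ring
  rw [hexp, hquad, hK]
  field_simp
  ring

theorem Vfun_trajectory_add_sum (hRic : Riccati A P Q B) (hP : Pᵀ = P)
    (hr : B ⬝ᵥ (P *ᵥ B) ≠ 0) (u : ℕ → ℝ) (m : ℕ) :
    Vfun P (trajectory A B x u (m + 1)) +
        ∑ i ∈ Finset.range m, Vfun Q (trajectory A B x u (i + 1)) =
      Vfun P x - Vfun Q x + B ⬝ᵥ (P *ᵥ B) *
        ∑ i ∈ Finset.range (m + 1), (u i - Kgain A P B ⬝ᵥ trajectory A B x u i) ^ 2 := by
  induction m with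
  | zero =>
    rw [Finset.sum_range_zero, Finset.sum_range_one, add_zero]
    exact Vfun_mulVec_add_smul A B hRic hP hr x (u 0)
  | succ m ih =>
    rw [Finset.sum_range_succ, Finset.sum_range_succ _ (m + 1), trajectory,
      Vfun_mulVec_add_smul A B hRic hP hr]
    linear_combination ih

theorem trajectory_eq_Acl_pow {u : ℕ → ℝ} {m : ℕ}
    (h : ∀ i < m, u i = Kgain A P B ⬝ᵥ trajectory A B x u i) :
    trajectory A B x u m = Acl A P B ^ m *ᵥ x := by
  induction m with
  | zero => simp [trajectory]
  | succ m ih =>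
    rw [trajectory, h m m.lt_succ_self, ih fun i hi => h i (hi.trans m.lt_succ_self),
      pow_succ', ← Matrix.mulVec_mulVec, Acl, Matrix.add_mulVec, Matrix.vecMulVec_mulVec,
      op_smul_eq_smul]

theorem forall_eq_Kgain_trajectory_iff (u : ℕ → ℝ) (m : ℕ) :
    (∀ i < m, u i = Kgain A P B ⬝ᵥ trajectory A B x u i) ↔
      ∀ i < m, u i = Kgain A P B ⬝ᵥ (Acl A P B ^ i *ᵥ x) := by
  refine ⟨fun h i hi => ?_, fun h => ?_⟩
  · rw [h i hi, trajectory_eq_Acl_pow A B x fun j hj => h j (hj.trans hi)]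
  · induction m with
    | zero => simp
    | succ m ih =>
      have ih' := ih fun i hi => h i (hi.trans m.lt_succ_self)
      intro i hi
      rcases Nat.lt_succ_iff_lt_or_eq.mp hi with hi | rfl
      · exact ih' i hi
      · rw [h i hi, trajectory_eq_Acl_pow A B x ih']

variable {N : ℕ}

theorem Phi_mulVec_add_Upsilon_mulVec_apply (u : Fin N → ℝ) (i : Fin N) (r : Fin n) :
    (Phi n N A B *ᵥ u + Upsilon n N A *ᵥ x) (i, r) =
      trajectory A B x (Function.extend Fin.val u 0) ((i : ℕ) + 1) r := by
  set ū := Function.extend Fin.val u 0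
  set f : ℕ → ℝ := fun j => if j < (i : ℕ) + 1 then ū j * (A ^ ((i : ℕ) - j) *ᵥ B) r else 0
  have hΦ : (Phi n N A B *ᵥ u) (i, r) =
      ∑ j ∈ Finset.range ((i : ℕ) + 1), ū j * (A ^ ((i : ℕ) - j) *ᵥ B) r := by
    calc (Phi n N A B *ᵥ u) (i, r) = ∑ j : Fin N, f j := by
          change ∑ j, Phi n N A B (i, r) j * u j = _
          refine Finset.sum_congr rfl fun j _ => ?_
          simp only [f, Phi, Matrix.of_apply, Nat.lt_succ_iff, ū, Fin.val_injective.extend_apply]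
          split_ifs <;> ring
      _ = ∑ j ∈ Finset.range N, f j := Fin.sum_univ_eq_sum_range f N
      _ = _ := by
          rw [← Finset.sum_filter]
          congr 1
          ext j
          simp only [Finset.mem_filter, Finset.mem_range]
          omega
  rw [Pi.add_apply, hΦ, trajectory_eq_pow_mulVec_add_sum, Pi.add_apply, Finset.sum_apply,
    add_comm]
  simp [Upsilon, Matrix.mulVec, dotProduct]

theorem dotProduct_Qbar_mulVec (z : Fin N × Fin n → ℝ) :
    z ⬝ᵥ (Qbar n N Q P *ᵥ z) =
      ∑ i : Fin N, Vfun (if (i : ℕ) = N - 1 then P else Q) fun r => z (i, r) := by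
  simp [dotProduct, Matrix.mulVec, Qbar, Fintype.sum_prod_type, Vfun]

theorem Jcost_eq_sum_Vfun {S : Matrix (Fin N × Fin n) (Fin N × Fin n) ℝ}
    (hS : Sᵀ * S = Qbar n N Q P) (u : Fin N → ℝ) :
    Jcost (S * Phi n N A B) (-(S * Upsilon n N A)) x u =
      ∑ i : Fin N, Vfun (if (i : ℕ) = N - 1 then P else Q)
        (trajectory A B x (Function.extend Fin.val u 0) ((i : ℕ) + 1)) := by
  set z := Phi n N A B *ᵥ u + Upsilon n N A *ᵥ x
  have hres : (S * Phi n N A B) *ᵥ u - (-(S * Upsilon n N A)) *ᵥ x = S *ᵥ z := by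
    rw [Matrix.neg_mulVec, sub_neg_eq_add, Matrix.mulVec_add, Matrix.mulVec_mulVec,
      Matrix.mulVec_mulVec]
  rw [Jcost, hres]
  nth_rw 1 [← Matrix.vecMul_transpose]
  rw [← Matrix.dotProduct_mulVec, Matrix.mulVec_mulVec, hS, dotProduct_Qbar_mulVec]
  refine Finset.sum_congr rfl fun i _ => ?_
  congr 1
  funext r
  exact Phi_mulVec_add_Upsilon_mulVec_apply A B x u i r

theorem Jcost_eq_Vfun_sub_add_sum_sq (hRic : Riccati A P Q B) (hP : Pᵀ = P)
    (hr : B ⬝ᵥ (P *ᵥ B) ≠ 0) {m : ℕ} {S : Matrix (Fin (m + 1) × Fin n) (Fin (m + 1) × Fin n) ℝ}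
    (hS : Sᵀ * S = Qbar n (m + 1) Q P) (u : Fin (m + 1) → ℝ) :
    Jcost (S * Phi n (m + 1) A B) (-(S * Upsilon n (m + 1) A)) x u =
      Vfun P x - Vfun Q x + B ⬝ᵥ (P *ᵥ B) * ∑ i ∈ Finset.range (m + 1),
        (Function.extend Fin.val u 0 i -
          Kgain A P B ⬝ᵥ trajectory A B x (Function.extend Fin.val u 0) i) ^ 2 := by
  rw [Jcost_eq_sum_Vfun A B x hS, ← Vfun_trajectory_add_sum A B x hRic hP hr,
    Fin.sum_univ_castSucc, add_comm, ← Fin.sum_univ_eq_sum_range]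
  simp only [Fin.val_last, Fin.val_castSucc, add_tsub_cancel_right, if_true]
  congr 1
  exact Finset.sum_congr rfl fun i _ => by rw [if_neg i.isLt.ne]

theorem sum_sq_sub_Kgain_trajectory_eq_zero_iff (u : Fin N → ℝ) :
    ∑ i ∈ Finset.range N, (Function.extend Fin.val u 0 i -
        Kgain A P B ⬝ᵥ trajectory A B x (Function.extend Fin.val u 0) i) ^ 2 = 0 ↔
      u = fun i : Fin N => Kgain A P B ⬝ᵥ (Acl A P B ^ (i : ℕ) *ᵥ x) := by
  rw [Finset.sum_eq_zero_iff_of_nonneg fun _ _ => sq_nonneg _]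
  simp only [Finset.mem_range, sq_eq_zero_iff, sub_eq_zero]
  rw [forall_eq_Kgain_trajectory_iff, funext_iff, Fin.forall_iff]
  exact forall₂_congr fun i hi => by rw [← Fin.val_injective.extend_apply u 0 ⟨i, hi⟩]

end LQ

theorem least_squares_is_lq_feedback_general {n N : ℕ} (hN : 1 ≤ N)
    (A : Matrix (Fin n) (Fin n) ℝ) (B : Fin n → ℝ) (hB : B ≠ 0)
    (Q P : Matrix (Fin n) (Fin n) ℝ) (hP : P.PosDef)
    (hRic : Riccati A P Q B)
    (S : Matrix (Fin N × Fin n) (Fin N × Fin n) ℝ)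
    (hS : S.PosSemidef) (hSsq : S * S = Qbar n N Q P)
    (G : Matrix (Fin N × Fin n) (Fin N) ℝ) (hG : G = S * Phi n N A B)
    (H : Matrix (Fin N × Fin n) (Fin n) ℝ) (hH : H = -(S * Upsilon n N A)) :
    ∀ x : Fin n → ℝ,
      ∀ u : Fin N → ℝ,
        u ≠ (fun i : Fin N => Kgain A P B ⬝ᵥ ((Acl A P B) ^ (i : ℕ) *ᵥ x)) →
        Jcost G H x (fun i : Fin N => Kgain A P B ⬝ᵥ ((Acl A P B) ^ (i : ℕ) *ᵥ x)) <
          Jcost G H x u := by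
  intro x u hu
  obtain ⟨m, rfl⟩ : ∃ m, N = m + 1 := ⟨N - 1, by omega⟩
  subst hG hH
  have hPt : Pᵀ = P := hP.isHermitian.eq
  have hStS : Sᵀ * S = Qbar n (m + 1) Q P := by rwa [show Sᵀ = S from hS.isHermitian.eq]
  have hr : 0 < B ⬝ᵥ (P *ᵥ B) := by simpa using hP.dotProduct_mulVec_pos hB
  simp only [LQ.Jcost_eq_Vfun_sub_add_sum_sq A B x hRic hPt hr.ne' hStS,
    (LQ.sum_sq_sub_Kgain_trajectory_eq_zero_iff A B x _).2 rfl, mul_zero, add_zero]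
  have hpos := lt_of_le_of_ne (Finset.sum_nonneg fun i _ => sq_nonneg _)
    (Ne.symm (mt (LQ.sum_sq_sub_Kgain_trajectory_eq_zero_iff A B x u).1 hu))
  linarith [mul_pos hr hpos]

/-- If `P > 0` solves the DARE and `K := −(BᵀPB)⁻¹BᵀPA`, then for
every `x` the (unique) least-squares minimizer of `u ↦ ‖Gu − Hx‖₂²` is the LQ
feedback sequence `u*(x) = [Kx; K(A+BK)x; …; K(A+BK)^{N−1}x]`. -/
theorem least_squares_is_lq_feedback {n N : ℕ} (hN : 1 ≤ N)
    (A : Matrix (Fin n) (Fin n) ℝ) (B : Fin n → ℝ) (hB : B ≠ 0)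
    (Q P : Matrix (Fin n) (Fin n) ℝ) (hQ : Q.PosDef) (hP : P.PosDef)
    (hRic : Riccati A P Q B)
    (S : Matrix (Fin N × Fin n) (Fin N × Fin n) ℝ)
    (hS : S.PosSemidef) (hSsq : S * S = Qbar n N Q P)
    (G : Matrix (Fin N × Fin n) (Fin N) ℝ) (hG : G = S * Phi n N A B)
    (H : Matrix (Fin N × Fin n) (Fin n) ℝ) (hH : H = -(S * Upsilon n N A)) :
    ∀ x : Fin n → ℝ,
      ∀ u : Fin N → ℝ,
        u ≠ (fun i : Fin N => Kgain A P B ⬝ᵥ ((Acl A P B) ^ (i : ℕ) *ᵥ x)) →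
        Jcost G H x (fun i : Fin N => Kgain A P B ⬝ᵥ ((Acl A P B) ^ (i : ℕ) *ᵥ x)) <
          Jcost G H x u :=
  least_squares_is_lq_feedback_general hN A B hB Q P hP hRic S hS hSsq G hG H hH
end
end

section
/- Suppose P > 0 solves the discrete algebraic Riccati equation with K := −(B^TPB)^{-1}B^TPA. Let u = [u'_0,…,u'_{N−1}]^T ∈ ℝ^N, write u'_i = K(A+BK)^i x + ε_i for i = 0,…,N−1 with ε = [ε_0,…,ε_{N−1}]^T, and let the predicted states be x'_0 = x, x'_{i+1} = Ax'_i + Bu'_i. Then x'_{i+1} = (A+BK)x'_i + Bw_i where w_i := ε_i − K Σ_{l=0}^{i−1} A^{i−1−l}Bε_l, and moreover w_i = (B^TPΦ_i/(B^TPB)) ε, where Φ_i = [A^iB, A^{i−1}B, …, B, 0, …, 0] ∈ ℝ^{n×N} is the (i+1)-th row block of Φ. -/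
open Matrix Filter Topology

noncomputable section

/- The input error `ε` drives the open-loop system `x⁺ = Ax + Bε`, and its response `S_m` from
`S_0 = 0` accounts exactly for the gap `x'_m − (A+BK)^m x`. Hence `x'_{i+1} − (A+BK)x'_i =
B(ε_i − K S_i) = B w_i`. Since `K = −(BᵀPB)⁻¹BᵀPA` and `A S_i + Bε_i = S_{i+1} = Φ_i ε`,
we get `(BᵀPB) w_i = BᵀPB ε_i + BᵀPA S_i = BᵀP Φ_i ε`. -/

/-- The state reached from `0` after `m` steps of `x⁺ = Ax + Bε`. -/
def openLoopResponse {n N : ℕ} (A : Matrix (Fin n) (Fin n) ℝ) (B : Fin n → ℝ)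
    (ε : Fin N → ℝ) (m : ℕ) : Fin n → ℝ :=
  ∑ l ∈ Finset.univ.filter (fun l : Fin N => (l : ℕ) < m),
    ε l • ((A ^ (m - 1 - (l : ℕ))) *ᵥ B)

section

variable {n N : ℕ} (A P : Matrix (Fin n) (Fin n) ℝ) (B : Fin n → ℝ)

lemma Acl_mulVec (v : Fin n → ℝ) :
    Acl A P B *ᵥ v = A *ᵥ v + (Kgain A P B ⬝ᵥ v) • B := by
  rw [Acl, add_mulVec, vecMulVec_mulVec, op_smul_eq_smul]

lemma Kgain_dotProduct (v : Fin n → ℝ) :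
    Kgain A P B ⬝ᵥ v = -((B ⬝ᵥ (P *ᵥ B))⁻¹ * (B ⬝ᵥ (P *ᵥ (A *ᵥ v)))) := by
  rw [Kgain, neg_dotProduct, smul_dotProduct, ← dotProduct_mulVec, ← mulVec_mulVec,
    smul_eq_mul]

lemma wErr_eq_sub_Kgain_dotProduct_openLoopResponse (ε : Fin N → ℝ) (i : Fin N) :
    wErr A P B ε i = ε i - Kgain A P B ⬝ᵥ openLoopResponse A B ε i :=
  rfl

lemma openLoopResponse_zero (ε : Fin N → ℝ) : openLoopResponse A B ε 0 = 0 := by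
  simp [openLoopResponse]

lemma openLoopResponse_succ (ε : Fin N → ℝ) (i : Fin N) :
    openLoopResponse A B ε (i + 1) = A *ᵥ openLoopResponse A B ε i + ε i • B := by
  have hsplit : Finset.univ.filter (fun l : Fin N => (l : ℕ) < i + 1) =
      insert i (Finset.univ.filter (fun l : Fin N => (l : ℕ) < i)) := by
    ext l
    simp only [Finset.mem_filter, Finset.mem_univ, true_and, Finset.mem_insert, Fin.ext_iff]
    omega
  rw [openLoopResponse, openLoopResponse, hsplit, Finset.sum_insert (by simp), add_comm,
    mulVec_sum]
  congr 1
  · refine Finset.sum_congr rfl fun l hl => ?_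
    have hli : (l : ℕ) < i := (Finset.mem_filter.mp hl).2
    rw [mulVec_smul, mulVec_mulVec, ← pow_succ']
    congr 4
    omega
  · simp

lemma PhiBlock_mulVec (ε : Fin N → ℝ) (i : Fin N) :
    PhiBlock n N A B i *ᵥ ε = openLoopResponse A B ε (i + 1) := by
  ext r
  rw [openLoopResponse, Finset.sum_apply, Finset.sum_filter, mulVec, dotProduct]
  refine Finset.sum_congr rfl fun l _ => ?_
  simp only [PhiBlock, Phi, of_apply, Nat.lt_succ_iff, Nat.add_sub_cancel]
  split_ifs <;> simp [mul_comm]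

lemma trajectory_eq_closedLoop_add_openLoopResponse (x : Fin n → ℝ) (u ε : Fin N → ℝ)
    (hu : ∀ i : Fin N, u i = Kgain A P B ⬝ᵥ ((Acl A P B) ^ (i : ℕ) *ᵥ x) + ε i)
    (xs : ℕ → Fin n → ℝ) (hx0 : xs 0 = x)
    (hstep : ∀ i : Fin N, xs ((i : ℕ) + 1) = A *ᵥ xs i + u i • B) :
    ∀ m ≤ N, xs m = (Acl A P B) ^ m *ᵥ x + openLoopResponse A B ε m := by
  intro m
  induction m with
  | zero => simp [hx0, openLoopResponse_zero]
  | succ m ih =>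
    intro hm
    let i : Fin N := ⟨m, hm⟩
    rw [hstep i, ih i.is_lt.le, hu i, openLoopResponse_succ A B ε i, pow_succ',
      ← mulVec_mulVec, Acl_mulVec, mulVec_add, add_smul]
    abel

end

theorem predicted_trajectory_disturbance_form_general {n N : ℕ}
    (A : Matrix (Fin n) (Fin n) ℝ) (B : Fin n → ℝ) (hB : B ≠ 0)
    (P : Matrix (Fin n) (Fin n) ℝ) (hP : P.PosDef)
    (x : Fin n → ℝ) (u ε : Fin N → ℝ)
    (hu : ∀ i : Fin N, u i = Kgain A P B ⬝ᵥ ((Acl A P B) ^ (i : ℕ) *ᵥ x) + ε i)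
    (xs : ℕ → Fin n → ℝ) (hx0 : xs 0 = x)
    (hstep : ∀ i : Fin N, xs ((i : ℕ) + 1) = A *ᵥ xs i + u i • B) :
    ∀ i : Fin N,
      xs ((i : ℕ) + 1) = Acl A P B *ᵥ xs i + wErr A P B ε i • B ∧
      wErr A P B ε i =
        (B ⬝ᵥ (P *ᵥ B))⁻¹ * (Matrix.vecMul B (P * PhiBlock n N A B i) ⬝ᵥ ε) := by
  intro i
  have hxi :=
    trajectory_eq_closedLoop_add_openLoopResponse A P B x u ε hu xs hx0 hstep i i.is_lt.le
  have hBPB : B ⬝ᵥ (P *ᵥ B) ≠ 0 := by simpa using (hP.dotProduct_mulVec_pos hB).ne'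
  constructor
  · rw [hstep i, hu i, Acl_mulVec, add_assoc, ← add_smul, hxi, dotProduct_add,
      wErr_eq_sub_Kgain_dotProduct_openLoopResponse]
    congr 2
    ring
  · rw [← dotProduct_mulVec, ← mulVec_mulVec, PhiBlock_mulVec, openLoopResponse_succ,
      wErr_eq_sub_Kgain_dotProduct_openLoopResponse, Kgain_dotProduct, mulVec_add, mulVec_smul,
      dotProduct_add, dotProduct_smul, smul_eq_mul]
    field_simp
    ring

/-- If `P > 0` solves the DARE, `u'_i = K(A+BK)^i x + ε_i` and
`x'_0 = x`, `x'_{i+1} = Ax'_i + Bu'_i`, then `x'_{i+1} = (A+BK)x'_i + Bw_i`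
where `w_i := ε_i − K Σ_{l=0}^{i−1} A^{i−1−l}Bε_l`, and moreover
`w_i = (BᵀPΦ_i/(BᵀPB))ε`. -/
theorem predicted_trajectory_disturbance_form {n N : ℕ} (hN : 1 ≤ N)
    (A : Matrix (Fin n) (Fin n) ℝ) (B : Fin n → ℝ) (hB : B ≠ 0)
    (Q P : Matrix (Fin n) (Fin n) ℝ) (hQ : Q.PosDef) (hP : P.PosDef)
    (hRic : Riccati A P Q B)
    (x : Fin n → ℝ) (u ε : Fin N → ℝ)
    (hu : ∀ i : Fin N, u i = Kgain A P B ⬝ᵥ ((Acl A P B) ^ (i : ℕ) *ᵥ x) + ε i)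
    (xs : ℕ → Fin n → ℝ) (hx0 : xs 0 = x)
    (hstep : ∀ i : Fin N, xs ((i : ℕ) + 1) = A *ᵥ xs i + u i • B) :
    ∀ i : Fin N,
      xs ((i : ℕ) + 1) = Acl A P B *ᵥ xs i + wErr A P B ε i • B ∧
      wErr A P B ε i =
        (B ⬝ᵥ (P *ᵥ B))⁻¹ * (Matrix.vecMul B (P * PhiBlock n N A B i) ⬝ᵥ ε) :=
  predicted_trajectory_disturbance_form_general A B hB P hP x u ε hu xs hx0 hstep
end
end

section
/- Suppose B ≠ 0, P > 0 solves the discrete algebraic Riccati equation, and ε ∈ ℝ^N satisfies ‖Gε‖₂² ≤ x^Tℰx for a positive semidefinite matrix ℰ. Then for each i = 0,…,N−1, the scalar w_i := (B^TPΦ_i/(B^TPB)) ε satisfies (B^TPB)|w_i|² ≤ c₁ · x^Tℰx, where c₁ := max_{i=0,…,N−1} λ_max(Φ_i^TPΦ_i(G^TG)^{-1}) > 0. -/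
open Matrix Filter Topology

noncomputable section

/-!
Write `W := GᵀG` and `Mᵢ := ΦᵢᵀPΦᵢ`. Cauchy–Schwarz in the inner product of `P` gives
`(BᵀPΦᵢε)² / (BᵀPB) ≤ εᵀMᵢε`. With `R := W^{1/2}`, the matrix `MᵢW⁻¹` is similar to the
symmetric matrix `R⁻¹MᵢR⁻¹`, so `Mᵢ ≤ λ_max(MᵢW⁻¹) • W` in the Loewner order and
`εᵀMᵢε ≤ c₁ εᵀWε = c₁ ‖Gε‖²`. The matrix `W` is invertible because `Φ` is block lower
triangular with diagonal blocks `B ≠ 0` and `S² = Q̄` is positive definite; `c₁ > 0`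
because `M₀` has the quadratic value `BᵀPB > 0`.
-/

namespace Matrix

variable {m o : Type*} [Fintype m] [Fintype o]

lemma dotProduct_mulVec_transpose_mul_mul {R : Type*} [CommSemiring R] (X : Matrix m o R)
    (P : Matrix m m R) (y : o → R) :
    y ⬝ᵥ ((Xᵀ * P * X) *ᵥ y) = (X *ᵥ y) ⬝ᵥ (P *ᵥ (X *ᵥ y)) := by
  rw [← mulVec_mulVec, ← mulVec_mulVec, dotProduct_mulVec, vecMul_transpose]

lemma PosSemidef.sq_dotProduct_mulVec_le {P : Matrix m m ℝ} (hP : P.PosSemidef) (u v : m → ℝ) :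
    (u ⬝ᵥ (P *ᵥ v)) ^ 2 ≤ (u ⬝ᵥ (P *ᵥ u)) * (v ⬝ᵥ (P *ᵥ v)) := by
  have hsymm : v ⬝ᵥ (P *ᵥ u) = u ⬝ᵥ (P *ᵥ v) := by
    rw [dotProduct_mulVec, ← mulVec_transpose, ← conjTranspose_eq_transpose_of_trivial, hP.1,
      dotProduct_comm]
  have hdiscr := discrim_le_zero (a := u ⬝ᵥ (P *ᵥ u)) (b := 2 * (u ⬝ᵥ (P *ᵥ v)))
    (c := v ⬝ᵥ (P *ᵥ v)) fun t => by
      have := hP.dotProduct_mulVec_nonneg (t • u + v)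
      simp only [star_trivial, mulVec_add, mulVec_smul, dotProduct_add, add_dotProduct,
        dotProduct_smul, smul_dotProduct, smul_eq_mul, hsymm] at this
      linarith
  rw [discrim] at hdiscr
  linarith

variable [DecidableEq o]

lemma dotProduct_blockDiagonal_mulVec {R : Type*} [CommSemiring R]
    (D : o → Matrix m m R) (v w : m × o → R) :
    v ⬝ᵥ (blockDiagonal D *ᵥ w) = ∑ k, (fun i => v (i, k)) ⬝ᵥ (D k *ᵥ fun i => w (i, k)) := by
  simp only [dotProduct, mulVec, blockDiagonal_apply, Fintype.sum_prod_type, ite_mul, zero_mul,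
    Finset.sum_ite_eq, Finset.mem_univ, if_true, Finset.mul_sum]
  exact Finset.sum_comm

lemma posDef_blockDiagonal {D : o → Matrix m m ℝ} (hD : ∀ k, (D k).PosDef) :
    (blockDiagonal D).PosDef := by
  refine PosDef.of_dotProduct_mulVec_pos (isHermitian_blockDiagonal_iff.mpr fun k => (hD k).1)
    fun v hv => ?_
  obtain ⟨⟨i, k⟩, hik⟩ := Function.ne_iff.mp hv
  rw [star_trivial, dotProduct_blockDiagonal_mulVec]
  refine Finset.sum_pos' (fun k _ => by simpa using (hD k).posSemidef.dotProduct_mulVec_nonneg _)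
    ⟨k, Finset.mem_univ _, ?_⟩
  simpa using (hD k).dotProduct_mulVec_pos (x := fun i => v (i, k)) (Function.ne_iff.mpr ⟨i, hik⟩)

variable [DecidableEq m]

lemma spectrum_mul_mul_inv_of_isUnit {K : Type*} [Field K] {R C : Matrix m m K} (hR : IsUnit R) :
    spectrum K (R * C * R⁻¹) = spectrum K C := by
  rw [← hR.unit_spec, ← coe_units_inv, spectrum.units_conjugate]

section LoewnerOrder

open scoped MatrixOrder

lemma IsHermitian.le_sSup_spectrum_smul_one {C : Matrix m m ℝ} (hC : C.IsHermitian) :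
    C ≤ sSup (spectrum ℝ C) • (1 : Matrix m m ℝ) := by
  simpa [Algebra.algebraMap_eq_smul_one] using le_algebraMap_of_spectrum_le (a := C)
    (fun x hx => le_csSup (finite_real_spectrum (A := C)).bddAbove hx) hC.isSelfAdjoint

lemma IsHermitian.le_sSup_spectrum_mul_inv_smul {M W : Matrix m m ℝ} (hM : M.IsHermitian)
    (hW : W.PosDef) : M ≤ sSup (spectrum ℝ (M * W⁻¹)) • W := by
  set R := CFC.sqrt W
  have hR : Rᴴ = R := (CFC.sqrt_nonneg W).posSemidef.1
  have hRR : R * R = W := CFC.sqrt_mul_sqrt_self W hW.posSemidef.nonneg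
  have hRu : IsUnit R := isUnit_of_mul_isUnit_left (hRR ▸ hW.isUnit)
  have hdet : IsUnit R.det := (isUnit_iff_isUnit_det R).mp hRu
  set C := R⁻¹ * M * R⁻¹
  have hC : C.IsHermitian := by
    have := isHermitian_mul_mul_conjTranspose R⁻¹ hM
    rwa [conjTranspose_nonsing_inv, hR] at this
  have hMC : M = R * C * R := by
    simp only [C, Matrix.mul_assoc, mul_nonsing_inv_cancel_left _ _ hdet]
    rw [nonsing_inv_mul _ hdet, Matrix.mul_one]
  have hspec : spectrum ℝ (M * W⁻¹) = spectrum ℝ C := by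
    have hconj : M * W⁻¹ = R * C * R⁻¹ := by
      rw [← hRR, Matrix.mul_inv_rev]
      simp only [C, Matrix.mul_assoc, mul_nonsing_inv_cancel_left _ _ hdet]
    rw [hconj, spectrum_mul_mul_inv_of_isUnit hRu]
  calc M = R * C * R := hMC
    _ ≤ R * (sSup (spectrum ℝ C) • 1) * R :=
      IsSelfAdjoint.conjugate_le_conjugate hC.le_sSup_spectrum_smul_one hR
    _ = _ := by rw [hspec, Matrix.mul_smul, Matrix.smul_mul, Matrix.mul_one, hRR]

lemma IsHermitian.dotProduct_mulVec_le_sSup_spectrum_mul_inv {M W : Matrix m m ℝ}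
    (hM : M.IsHermitian) (hW : W.PosDef) (y : m → ℝ) :
    y ⬝ᵥ (M *ᵥ y) ≤ sSup (spectrum ℝ (M * W⁻¹)) * (y ⬝ᵥ (W *ᵥ y)) := by
  have := (le_iff.mp (hM.le_sSup_spectrum_mul_inv_smul hW)).dotProduct_mulVec_nonneg y
  simp only [star_trivial, sub_mulVec, smul_mulVec, dotProduct_sub, dotProduct_smul,
    smul_eq_mul] at this
  linarith

lemma PosSemidef.sSup_spectrum_mul_inv_pos {M W : Matrix m m ℝ} (hM : M.PosSemidef)
    (hM0 : M ≠ 0) (hW : W.PosDef) : 0 < sSup (spectrum ℝ (M * W⁻¹)) := by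
  by_contra! hle
  refine hM0 (le_antisymm ?_ hM.nonneg)
  calc M ≤ sSup (spectrum ℝ (M * W⁻¹)) • W := hM.1.le_sSup_spectrum_mul_inv_smul hW
    _ ≤ 0 := smul_nonpos_of_nonpos_of_nonneg hle hW.posSemidef.nonneg

end LoewnerOrder

end Matrix

section Prediction

variable {n N : ℕ} (A : Matrix (Fin n) (Fin n) ℝ) (B : Fin n → ℝ)

lemma Phi_mulVec_apply_of_forall_lt {u : Fin N → ℝ} {j : Fin N} (hu : ∀ l < j, u l = 0)
    (r : Fin n) : (Phi n N A B *ᵥ u) (j, r) = B r * u j := by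
  rw [mulVec, dotProduct, Finset.sum_eq_single j]
  · simp [Phi]
  · intro l _ hlj
    rcases lt_or_gt_of_ne hlj with hlt | hgt
    · rw [hu l hlt, mul_zero]
    · have hnle : ¬ l ≤ j := not_le.mpr hgt
      simp [Phi, hnle]
  · simp

lemma Phi_mulVec_injective (hB : B ≠ 0) : Function.Injective (Phi n N A B).mulVec := by
  obtain ⟨r, hr⟩ := Function.ne_iff.mp hB
  suffices hker : ∀ u, Phi n N A B *ᵥ u = 0 → u = 0 from
    fun u v huv => sub_eq_zero.mp (hker _ (by rw [mulVec_sub, huv, sub_self]))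
  intro u hu
  funext j
  induction j using WellFoundedLT.induction with
  | ind j ih =>
    have := Phi_mulVec_apply_of_forall_lt A B ih r
    rw [hu] at this
    exact (mul_eq_zero.mp this.symm).resolve_left hr

lemma PhiBlock_mulVec_single (i : Fin N) : PhiBlock n N A B i *ᵥ Pi.single i 1 = B := by
  funext r
  simp [mulVec_single, PhiBlock, Phi]

lemma Qbar_posDef {Q P : Matrix (Fin n) (Fin n) ℝ} (hQ : Q.PosDef) (hP : P.PosDef) :
    (Qbar n N Q P).PosDef := by
  have hblock : Qbar n N Q P = (blockDiagonal fun i : Fin N =>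
      if (i : ℕ) = N - 1 then P else Q).submatrix Prod.swap Prod.swap := by
    ext p q
    simp [Qbar, blockDiagonal_apply]
  rw [hblock]
  refine (posDef_blockDiagonal fun i => ?_).submatrix Prod.swap_injective
  split_ifs
  exacts [hP, hQ]

lemma posDef_transpose_mul_self_of_eq_mul_Phi {Q P : Matrix (Fin n) (Fin n) ℝ} (hQ : Q.PosDef)
    (hP : P.PosDef) (hB : B ≠ 0) {S : Matrix (Fin N × Fin n) (Fin N × Fin n) ℝ}
    (hSsq : S * S = Qbar n N Q P) {G : Matrix (Fin N × Fin n) (Fin N) ℝ}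
    (hG : G = S * Phi n N A B) : (Gᵀ * G).PosDef := by
  have hSunit : IsUnit S := isUnit_of_mul_isUnit_left (hSsq ▸ (Qbar_posDef hQ hP).isUnit)
  have hcomp : G.mulVec = S.mulVec ∘ (Phi n N A B).mulVec := by
    funext u
    simp [hG, mulVec_mulVec]
  rw [← conjTranspose_eq_transpose_of_trivial]
  refine PosDef.conjTranspose_mul_self G ?_
  rw [hcomp]
  exact (mulVec_injective_iff_isUnit.mpr hSunit).comp (Phi_mulVec_injective A B hB)

variable {P : Matrix (Fin n) (Fin n) ℝ} {G : Matrix (Fin N × Fin n) (Fin N) ℝ}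

lemma sSup_spectrum_le_c1const (i : Fin N) :
    sSup (spectrum ℝ ((PhiBlock n N A B i)ᵀ * P * PhiBlock n N A B i * (Gᵀ * G)⁻¹)) ≤
      c1const n N A P B G :=
  le_ciSup (f := fun i => sSup (spectrum ℝ
    ((PhiBlock n N A B i)ᵀ * P * PhiBlock n N A B i * (Gᵀ * G)⁻¹))) (Set.finite_range _).bddAbove i

lemma c1const_pos (hN : 1 ≤ N) (hB : B ≠ 0) (hP : P.PosDef) (hW : (Gᵀ * G).PosDef) :
    0 < c1const n N A P B G := by
  set i : Fin N := ⟨0, hN⟩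
  have hM : ((PhiBlock n N A B i)ᵀ * P * PhiBlock n N A B i).PosSemidef := by
    simpa using hP.posSemidef.conjTranspose_mul_mul_same (PhiBlock n N A B i)
  have hM0 : (PhiBlock n N A B i)ᵀ * P * PhiBlock n N A B i ≠ 0 := by
    intro h0
    have := dotProduct_mulVec_transpose_mul_mul (PhiBlock n N A B i) P (Pi.single i 1)
    rw [h0, PhiBlock_mulVec_single, zero_mulVec, dotProduct_zero] at this
    simpa [← this] using hP.dotProduct_mulVec_pos hB
  exact (hM.sSup_spectrum_mul_inv_pos hM0 hW).trans_le (sSup_spectrum_le_c1const A B i)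

lemma dotProduct_PhiBlock_le_c1const (hP : P.PosDef) (hW : (Gᵀ * G).PosDef) (i : Fin N)
    (ε : Fin N → ℝ) :
    (PhiBlock n N A B i *ᵥ ε) ⬝ᵥ (P *ᵥ (PhiBlock n N A B i *ᵥ ε)) ≤
      c1const n N A P B G * ((G *ᵥ ε) ⬝ᵥ (G *ᵥ ε)) := by
  have hM : ((PhiBlock n N A B i)ᵀ * P * PhiBlock n N A B i).IsHermitian := by
    simpa using isHermitian_conjTranspose_mul_mul (PhiBlock n N A B i) hP.1
  have hGG : 0 ≤ (G *ᵥ ε) ⬝ᵥ (G *ᵥ ε) := by simpa using dotProduct_star_self_nonneg (G *ᵥ ε)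
  calc (PhiBlock n N A B i *ᵥ ε) ⬝ᵥ (P *ᵥ (PhiBlock n N A B i *ᵥ ε))
      = ε ⬝ᵥ (((PhiBlock n N A B i)ᵀ * P * PhiBlock n N A B i) *ᵥ ε) :=
        (dotProduct_mulVec_transpose_mul_mul _ _ _).symm
    _ ≤ sSup (spectrum ℝ ((PhiBlock n N A B i)ᵀ * P * PhiBlock n N A B i * (Gᵀ * G)⁻¹)) *
          (ε ⬝ᵥ ((Gᵀ * G) *ᵥ ε)) := hM.dotProduct_mulVec_le_sSup_spectrum_mul_inv hW ε
    _ ≤ c1const n N A P B G * ((G *ᵥ ε) ⬝ᵥ (G *ᵥ ε)) := by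
        rw [← mulVec_mulVec, dotProduct_mulVec, vecMul_transpose]
        exact mul_le_mul_of_nonneg_right (sSup_spectrum_le_c1const A B i) hGG

end Prediction

theorem disturbance_bound_general {n N : ℕ} (hN : 1 ≤ N)
    (A : Matrix (Fin n) (Fin n) ℝ) (B : Fin n → ℝ) (hB : B ≠ 0)
    (Q P : Matrix (Fin n) (Fin n) ℝ) (hQ : Q.PosDef) (hP : P.PosDef)
    (S : Matrix (Fin N × Fin n) (Fin N × Fin n) ℝ)
    (hSsq : S * S = Qbar n N Q P)
    (G : Matrix (Fin N × Fin n) (Fin N) ℝ) (hG : G = S * Phi n N A B)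
    (E : Matrix (Fin n) (Fin n) ℝ)
    (x : Fin n → ℝ) (ε : Fin N → ℝ)
    (hGe : (G *ᵥ ε) ⬝ᵥ (G *ᵥ ε) ≤ x ⬝ᵥ (E *ᵥ x)) :
    0 < c1const n N A P B G ∧
      ∀ i : Fin N,
        (B ⬝ᵥ (P *ᵥ B)) *
            ((B ⬝ᵥ (P *ᵥ B))⁻¹ *
              (Matrix.vecMul B (P * PhiBlock n N A B i) ⬝ᵥ ε)) ^ 2 ≤
          c1const n N A P B G * (x ⬝ᵥ (E *ᵥ x)) := by
  have hW := posDef_transpose_mul_self_of_eq_mul_Phi A B hQ hP hB hSsq hG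
  have hc₁ := c1const_pos A B hN hB hP hW
  refine ⟨hc₁, fun i => ?_⟩
  set v := PhiBlock n N A B i *ᵥ ε
  have hβ : 0 < B ⬝ᵥ (P *ᵥ B) := by simpa using hP.dotProduct_mulVec_pos hB
  have hCS := hP.posSemidef.sq_dotProduct_mulVec_le B v
  have hv : vecMul B (P * PhiBlock n N A B i) ⬝ᵥ ε = B ⬝ᵥ (P *ᵥ v) := by
    rw [← dotProduct_mulVec, ← mulVec_mulVec]
  calc (B ⬝ᵥ (P *ᵥ B)) * ((B ⬝ᵥ (P *ᵥ B))⁻¹ * (vecMul B (P * PhiBlock n N A B i) ⬝ᵥ ε)) ^ 2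
      = (B ⬝ᵥ (P *ᵥ v)) ^ 2 / (B ⬝ᵥ (P *ᵥ B)) := by
        rw [hv]
        field_simp
    _ ≤ v ⬝ᵥ (P *ᵥ v) := by rwa [div_le_iff₀' hβ]
    _ ≤ c1const n N A P B G * ((G *ᵥ ε) ⬝ᵥ (G *ᵥ ε)) :=
        dotProduct_PhiBlock_le_c1const A B hP hW i ε
    _ ≤ c1const n N A P B G * (x ⬝ᵥ (E *ᵥ x)) := mul_le_mul_of_nonneg_left hGe hc₁.le

/-- If `B ≠ 0`, `P > 0` solves the DARE, and `‖Gε‖₂² ≤ xᵀℰx` for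
a psd `ℰ`, then for each `i` the scalar `w_i := (BᵀPΦ_i/(BᵀPB))ε` satisfies
`(BᵀPB)|w_i|² ≤ c₁ · xᵀℰx`, where
`c₁ := max_i λ_max(Φ_iᵀPΦ_i(GᵀG)⁻¹) > 0`. -/
theorem disturbance_bound {n N : ℕ} (hN : 1 ≤ N)
    (A : Matrix (Fin n) (Fin n) ℝ) (B : Fin n → ℝ) (hB : B ≠ 0)
    (Q P : Matrix (Fin n) (Fin n) ℝ) (hQ : Q.PosDef) (hP : P.PosDef)
    (hRic : Riccati A P Q B)
    (S : Matrix (Fin N × Fin n) (Fin N × Fin n) ℝ)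
    (hS : S.PosSemidef) (hSsq : S * S = Qbar n N Q P)
    (G : Matrix (Fin N × Fin n) (Fin N) ℝ) (hG : G = S * Phi n N A B)
    (E : Matrix (Fin n) (Fin n) ℝ) (hE : E.PosSemidef)
    (x : Fin n → ℝ) (ε : Fin N → ℝ)
    (hGe : (G *ᵥ ε) ⬝ᵥ (G *ᵥ ε) ≤ x ⬝ᵥ (E *ᵥ x)) :
    0 < c1const n N A P B G ∧
      ∀ i : Fin N,
        (B ⬝ᵥ (P *ᵥ B)) *
            ((B ⬝ᵥ (P *ᵥ B))⁻¹ *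
              (Matrix.vecMul B (P * PhiBlock n N A B i) ⬝ᵥ ε)) ^ 2 ≤
          c1const n N A P B G * (x ⬝ᵥ (E *ᵥ x)) :=
  disturbance_bound_general hN A B hB Q P hQ hP S hSsq G hG E x ε hGe
end
end
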